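/- Let m ≥ 1 and k ≥ 1 be integers, let P₁, P₂ ∈ B₃⁺, set P = P₁·a₁·a₂^{2k}·a₀·P₂ and α = δ^{−m}·P. Suppose π(α) is a 3-cycle, α is a summit element with summit exponent −m, and m ≤ e(P) − (2k+1). Then min{|β| : β is conjugate to α} = e(P), and there exists a list s of elements of {a_i, a_i⁻¹ : i ∈ ZMod 3} of length e(P) − (2k+2) such that a₁·a₂^{2k}·a₁⁻¹·(∏s) is conjugate to α; that is, α is conjugate to a₁a₂^{2k}a₁⁻¹W which is a shortest word in its conjugacy class. -/

import Mathlib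

/-!
Since `δ = a₁ a₀`, we have `a₀ = a₁⁻¹ δ`, so `α = δ^{-m} P₁ · a₁ a₂^{2k} a₁⁻¹ · δ P₂`. Moving
`δ^{-m} P₁` to the end conjugates `α` to `a₁ a₂^{2k} a₁⁻¹ · δ^{-(m-1)} Q` with `Q` positive of
length `e(P) - 2k - 2 ≥ m - 1`, and each `δ⁻¹` turns one letter of `Q` into an inverse letter
(`δ⁻¹ a_{i+1} = a_i⁻¹`): this is a word of length `e(P)`. Conversely, a word of length `ℓ` with
`n` inverse letters is `δ^{-n}` times a positive braid, so its exponent sum is `ℓ - 2n`; the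
summit condition forces `n ≥ m`, hence `ℓ = e(P) + 2(n - m) ≥ e(P)`.
-/

namespace Braid

/-- Relations of the dual (band-generator) presentation of the 3-braid group:
`a (i+1) * a i = a (i+2) * a (i+1)` for all `i : ZMod 3`. -/
def braidRels : Set (FreeGroup (ZMod 3)) :=
  { r | ∃ i : ZMod 3,
      r = FreeGroup.of (i + 1) * FreeGroup.of i *
          (FreeGroup.of (i + 2) * FreeGroup.of (i + 1))⁻¹ }

/-- The 3-braid group with the band-generator presentation. -/
abbrev B3 := PresentedGroup braidRels

/-- The band generators `a i`, `i : ZMod 3`. -/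
def a (i : ZMod 3) : B3 := PresentedGroup.of i

/-- The fundamental element `δ = a₂ * a₁`. -/
def δ : B3 := a 2 * a 1

/-- The submonoid of positive braids. -/
def Pos : Submonoid B3 := Submonoid.closure (Set.range a)

/-- The exponent-sum homomorphism, sending each generator to `1 : ℤ`. -/
def eHom : B3 →* Multiplicative ℤ :=
  PresentedGroup.toGroup (f := fun _ => Multiplicative.ofAdd (1 : ℤ)) (by
    rintro r ⟨i, rfl⟩
    simp only [map_mul, map_inv, FreeGroup.lift_apply_of]
    group)

/-- The exponent sum (letter length on positive braids) as an integer. -/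
def elen (x : B3) : ℤ := Multiplicative.toAdd (eHom x)

/-- The right complement `X* = X⁻¹ * δ^{e(X)}`. -/
def rc (X : B3) : B3 := X⁻¹ * δ ^ elen X

/-- The `n`-th power of the rotation automorphism `τ`: `τ^n (x) = δ^{-n} * x * δ^n`. -/
def tauPow (n : ℤ) (x : B3) : B3 := δ ^ (-n) * x * δ ^ n

/-- The positive braid represented by a list of generator indices. -/
def wordProd (l : List (ZMod 3)) : B3 := (l.map a).prod

/-- A word is nondecreasing if each letter index is the previous one or the previous one
plus `1` (mod 3). -/
def NDWord (l : List (ZMod 3)) : Prop :=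
  l.Chain' (fun x y => y = x ∨ y = x + 1)

/-- The syllable number of a word: the number of maximal constant blocks. -/
def syl : List (ZMod 3) → ℕ
  | [] => 0
  | [_] => 1
  | x :: y :: t => (if x = y then 0 else 1) + syl (y :: t)

/-- The permutations underlying the band generators. -/
def perm3 (i : ZMod 3) : Equiv.Perm (Fin 3) :=
  if i = 0 then Equiv.swap 0 2 else if i = 1 then Equiv.swap 0 1 else Equiv.swap 1 2

lemma perm3_rel : ∀ i : ZMod 3,
    perm3 (i + 1) * perm3 i * (perm3 (i + 2) * perm3 (i + 1))⁻¹ = 1 := by decide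

/-- The homomorphism to the symmetric group on 3 letters (underlying permutation). -/
def permOf : B3 →* Equiv.Perm (Fin 3) :=
  PresentedGroup.toGroup (f := perm3) (by
    rintro r ⟨i, rfl⟩
    simp only [map_mul, map_inv, FreeGroup.lift_apply_of]
    exact perm3_rel i)

/-- The set of band generators and their inverses. -/
def genSet : Set B3 := Set.range a ∪ Set.range (fun i => (a i)⁻¹)

/-- The band-generator word length of a 3-braid. -/
noncomputable def wordLen (x : B3) : ℕ :=
  sInf { n | ∃ s : List B3, s.length = n ∧ (∀ g ∈ s, g ∈ genSet) ∧ s.prod = x }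

/-- The minimal band-generator word length in the conjugacy class. -/
noncomputable def minConjLen (x : B3) : ℕ :=
  sInf { n | ∃ y, IsConj x y ∧ wordLen y = n }

/-- `α` is a summit element with summit exponent `u` if `δ^{-u} * α` is positive and `u` is
the maximal such exponent over the conjugacy class. -/
def IsSummit (α : B3) (u : ℤ) : Prop :=
  δ ^ (-u) * α ∈ Pos ∧ ∀ β : B3, IsConj α β → ∀ v : ℤ, δ ^ (-v) * β ∈ Pos → v ≤ u

lemma a_succ_mul_a (i : ZMod 3) : a (i + 1) * a i = a (i + 2) * a (i + 1) :=
  PresentedGroup.mk_eq_mk_of_mul_inv_mem ⟨i, rfl⟩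

lemma δ_eq_a_succ_mul_a (i : ZMod 3) : δ = a (i + 1) * a i := by
  have h0 : a 1 * a 0 = a 2 * a 1 := a_succ_mul_a 0
  have h1 : a 2 * a 1 = a 0 * a 2 := a_succ_mul_a 1
  fin_cases i
  exacts [h0.symm, rfl, h1]

lemma inv_a_eq (i : ZMod 3) : (a i)⁻¹ = δ⁻¹ * a (i + 1) := by
  rw [δ_eq_a_succ_mul_a i]; group

lemma a_mul_δ (i : ZMod 3) : a i * δ = δ * a (i + 1) := by
  have h : i + 2 + 1 = i := by rw [add_assoc, show (2 + 1 : ZMod 3) = 0 from rfl, add_zero]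
  calc a i * δ = a i * a (i + 2) * a (i + 1) := by
        rw [δ_eq_a_succ_mul_a (i + 1), add_assoc i 1 1, mul_assoc]; rfl
    _ = δ * a (i + 1) := by rw [δ_eq_a_succ_mul_a (i + 2), h]

lemma a_mul_δ_pow (i : ZMod 3) (n : ℕ) : a i * δ ^ n = δ ^ n * a (i + n) := by
  induction n with
  | zero => simp
  | succ n ih => rw [pow_succ, ← mul_assoc, ih, mul_assoc, a_mul_δ, ← mul_assoc, Nat.cast_succ,
      add_assoc]

lemma δ_pow_mul_a (i : ZMod 3) (n : ℕ) : δ ^ n * a i = a (i - n) * δ ^ n := by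
  simpa using (a_mul_δ_pow (i - n) n).symm

lemma δ_inv_pow_mul_a (i : ZMod 3) (n : ℕ) : δ⁻¹ ^ n * a i = a (i + n) * δ⁻¹ ^ n := by
  rw [inv_pow]; exact (SemiconjBy.inv_symm_left (a_mul_δ_pow i n).symm).eq

lemma elen_mul (x y : B3) : elen (x * y) = elen x + elen y := by
  simp [elen]

lemma elen_zpow (x : B3) (n : ℤ) : elen (x ^ n) = n * elen x := by
  simp [elen, toAdd_zpow]

lemma elen_pow (x : B3) (n : ℕ) : elen (x ^ n) = n * elen x := by
  simpa using elen_zpow x n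

lemma elen_inv (x : B3) : elen x⁻¹ = -elen x := by
  simpa using elen_zpow x (-1)

lemma elen_a (i : ZMod 3) : elen (a i) = 1 := by
  simp [elen, eHom, a, PresentedGroup.toGroup.of]

lemma elen_δ : elen δ = 2 := by
  simp [δ, elen_mul, elen_a]

lemma elen_wordProd (l : List (ZMod 3)) : elen (wordProd l) = l.length := by
  induction l with
  | nil => simp [wordProd, elen]
  | cons i l ih => simp [wordProd, elen_mul, elen_a, ← ih]; ring

lemma elen_eq_of_isConj {x y : B3} (h : IsConj x y) : elen x = elen y :=
  congrArg Multiplicative.toAdd (isConj_iff_eq.mp (eHom.map_isConj h))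

lemma wordProd_cons (i : ZMod 3) (l : List (ZMod 3)) :
    wordProd (i :: l) = a i * wordProd l := by
  simp [wordProd]

lemma exists_wordProd_eq {x : B3} (hx : x ∈ Pos) : ∃ l : List (ZMod 3), wordProd l = x := by
  induction hx using Submonoid.closure_induction with
  | mem x hx => obtain ⟨i, rfl⟩ := hx; exact ⟨[i], by simp [wordProd]⟩
  | one => exact ⟨[], rfl⟩
  | mul x y _ _ hx hy =>
    obtain ⟨l₁, rfl⟩ := hx
    obtain ⟨l₂, rfl⟩ := hy
    exact ⟨l₁ ++ l₂, by simp [wordProd]⟩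

lemma a_mem_pos (i : ZMod 3) : a i ∈ Pos := Submonoid.subset_closure ⟨i, rfl⟩

lemma δ_pow_mul_mul_inv_mem_pos {x : B3} (hx : x ∈ Pos) (n : ℕ) :
    δ ^ n * x * (δ ^ n)⁻¹ ∈ Pos := by
  induction hx using Submonoid.closure_induction with
  | mem x hx =>
    obtain ⟨i, rfl⟩ := hx
    rw [δ_pow_mul_a, mul_inv_cancel_right]
    exact a_mem_pos _
  | one => simp [Pos]
  | mul x y _ _ hx hy =>
    simpa [mul_assoc] using Pos.mul_mem hx hy

lemma δ_pow_mul_a_mul_mem_pos {x : B3} {n : ℕ} (hx : δ ^ n * x ∈ Pos) (i : ZMod 3) :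
    δ ^ n * (a i * x) ∈ Pos := by
  rw [← mul_assoc, δ_pow_mul_a, mul_assoc]
  exact Pos.mul_mem (a_mem_pos _) hx

def HasGenWord (x : B3) (n : ℕ) : Prop :=
  ∃ s : List B3, s.length = n ∧ (∀ g ∈ s, g ∈ genSet) ∧ s.prod = x

lemma hasGenWord_one : HasGenWord 1 0 := ⟨[], rfl, by simp, rfl⟩

lemma hasGenWord_a (i : ZMod 3) : HasGenWord (a i) 1 :=
  ⟨[a i], rfl, by simp [genSet], by simp⟩

lemma hasGenWord_inv_a (i : ZMod 3) : HasGenWord (a i)⁻¹ 1 :=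
  ⟨[(a i)⁻¹], rfl, by simp [genSet], by simp⟩

lemma HasGenWord.mul {x y : B3} {p q : ℕ} (hx : HasGenWord x p) (hy : HasGenWord y q) :
    HasGenWord (x * y) (p + q) := by
  obtain ⟨s, rfl, hs, rfl⟩ := hx
  obtain ⟨t, rfl, ht, rfl⟩ := hy
  exact ⟨s ++ t, by simp, fun g hg => (List.mem_append.1 hg).elim (hs g) (ht g), by simp⟩

lemma HasGenWord.pow {x : B3} {p : ℕ} (hx : HasGenWord x p) (n : ℕ) :
    HasGenWord (x ^ n) (n * p) := by
  induction n with
  | zero => simpa using hasGenWord_one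
  | succ n ih => simpa [pow_succ, add_mul] using ih.mul hx

lemma exists_hasGenWord (x : B3) : ∃ n, HasGenWord x n := by
  have hx : x ∈ Subgroup.closure (Set.range a) := by
    rw [show Set.range a = Set.range PresentedGroup.of from rfl, PresentedGroup.closure_range_of]
    trivial
  induction hx using Subgroup.closure_induction'' with
  | mem x hx => obtain ⟨i, rfl⟩ := hx; exact ⟨1, hasGenWord_a i⟩
  | inv_mem x hx => obtain ⟨i, rfl⟩ := hx; exact ⟨1, hasGenWord_inv_a i⟩
  | one => exact ⟨0, hasGenWord_one⟩
  | mul x y _ _ hx hy =>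
    obtain ⟨p, hx⟩ := hx
    obtain ⟨q, hy⟩ := hy
    exact ⟨p + q, hx.mul hy⟩

lemma hasGenWord_wordLen (x : B3) : HasGenWord x (wordLen x) :=
  Nat.sInf_mem (exists_hasGenWord x)

lemma minConjLen_le {x y : B3} {n : ℕ} (hxy : IsConj x y) (hy : HasGenWord y n) :
    minConjLen x ≤ n :=
  calc minConjLen x ≤ wordLen y := Nat.sInf_le ⟨y, hxy, rfl⟩
    _ ≤ n := Nat.sInf_le hy

lemma exists_isConj_wordLen_eq_minConjLen (x : B3) :
    ∃ y, IsConj x y ∧ wordLen y = minConjLen x :=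
  Nat.sInf_mem (s := {n | ∃ y, IsConj x y ∧ wordLen y = n}) ⟨_, x, IsConj.refl x, rfl⟩

lemma HasGenWord.exists_δ_pow_mul_mem_pos {x : B3} {ℓ : ℕ} (hx : HasGenWord x ℓ) :
    ∃ n : ℕ, δ ^ n * x ∈ Pos ∧ elen x + 2 * n = ℓ := by
  obtain ⟨s, rfl, hs, rfl⟩ := hx
  induction s with
  | nil => exact ⟨0, by simp [Pos.one_mem], by simp [elen]⟩
  | cons g s ih =>
    obtain ⟨n, hpos, hlen⟩ := ih fun g hg => hs g (List.mem_cons_of_mem _ hg)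
    rcases hs g List.mem_cons_self with ⟨i, rfl⟩ | ⟨i, rfl⟩
    · refine ⟨n, δ_pow_mul_a_mul_mem_pos hpos i, ?_⟩
      simp only [List.prod_cons, elen_mul, elen_a, List.length_cons]
      omega
    · refine ⟨n + 1, ?_, ?_⟩
      · simpa [pow_succ, inv_a_eq, mul_assoc] using δ_pow_mul_a_mul_mem_pos hpos (i + 1)
      · simp only [List.prod_cons, elen_mul, elen_inv, elen_a, List.length_cons]
        omega

lemma hasGenWord_δ_inv_pow_mul_wordProd {n : ℕ} {l : List (ZMod 3)} (hn : n ≤ l.length) :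
    HasGenWord (δ⁻¹ ^ n * wordProd l) l.length := by
  induction n generalizing l with
  | zero => exact ⟨l.map a, by simp, by simp [genSet], by simp [wordProd]⟩
  | succ n ih =>
    obtain _ | ⟨i, l⟩ := l
    · simp at hn
    have h : δ⁻¹ ^ (n + 1) * wordProd (i :: l) = (a (i + n - 1))⁻¹ * (δ⁻¹ ^ n * wordProd l) := by
      rw [wordProd_cons, pow_succ', mul_assoc, ← mul_assoc (δ⁻¹ ^ n), δ_inv_pow_mul_a,
        inv_a_eq, sub_add_cancel]
      simp only [mul_assoc]
    rw [h, List.length_cons, add_comm l.length 1]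
    exact (hasGenWord_inv_a _).mul (ih (by simpa using hn))

lemma IsSummit.elen_sub_two_mul_le_minConjLen {α : B3} {u : ℤ} (hs : IsSummit α u) :
    elen α - 2 * u ≤ minConjLen α := by
  obtain ⟨y, hαy, hy⟩ := exists_isConj_wordLen_eq_minConjLen α
  obtain ⟨n, hpos, hlen⟩ := (hasGenWord_wordLen y).exists_δ_pow_mul_mem_pos
  have hn : -(n : ℤ) ≤ u := hs.2 y hαy (-n) (by simpa using hpos)
  rw [elen_eq_of_isConj hαy, ← hy]
  omega

lemma a_zero_eq : a 0 = (a 1)⁻¹ * δ := by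
  rw [δ_eq_a_succ_mul_a 0, zero_add, inv_mul_cancel_left]

theorem lemma_B_i_general (m k : ℕ) (hm : 1 ≤ m) (P₁ P₂ : B3)
    (h₁ : P₁ ∈ Pos) (h₂ : P₂ ∈ Pos) (P α : B3)
    (hP : P = P₁ * a 1 * (a 2) ^ (2 * k) * a 0 * P₂)
    (hα : α = δ ^ (-(m : ℤ)) * P)
    (hs : IsSummit α (-(m : ℤ)))
    (hle : (m : ℤ) ≤ elen P - (2 * (k : ℤ) + 1)) :
    (minConjLen α : ℤ) = elen P ∧
    ∃ s : List B3, (∀ g ∈ s, g ∈ genSet) ∧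
      (s.length : ℤ) = elen P - (2 * (k : ℤ) + 2) ∧
      IsConj α (a 1 * (a 2) ^ (2 * k) * (a 1)⁻¹ * s.prod) := by
  obtain ⟨n, rfl⟩ := Nat.exists_eq_add_of_le' hm
  obtain ⟨l, hl⟩ := exists_wordProd_eq
    (Pos.mul_mem (δ_pow_mul_mul_inv_mem_pos h₂ (n + 1)) h₁)
  have hconj : IsConj α (a 1 * a 2 ^ (2 * k) * (a 1)⁻¹ * (δ⁻¹ ^ n * wordProd l)) :=
    isConj_iff.2 ⟨(δ ^ (-((n + 1 : ℕ) : ℤ)) * P₁)⁻¹, by rw [hl, hα, hP, a_zero_eq]; group⟩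
  have hlen : (l.length : ℤ) = elen P - (2 * k + 2) := by
    rw [← elen_wordProd, hl, hP]
    simp only [elen_mul, elen_inv, elen_pow, elen_a]
    push_cast
    ring
  obtain ⟨s, hslen, hsgen, hsprod⟩ :=
    hasGenWord_δ_inv_pow_mul_wordProd (n := n) (l := l) (by omega)
  refine ⟨le_antisymm ?_ ?_, s, hsgen, by rw [hslen, hlen], hsprod ▸ hconj⟩
  · have hword := ((((hasGenWord_a 1).mul ((hasGenWord_a 2).pow (2 * k))).mul
      (hasGenWord_inv_a 1)).mul ⟨s, hslen, hsgen, hsprod⟩)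
    have hmin := minConjLen_le hconj hword
    omega
  · have helen : elen α = elen P - 2 * (n + 1 : ℕ) := by
      rw [hα, elen_mul, elen_zpow, elen_δ]
      ring
    linarith [hs.elen_sub_two_mul_le_minConjLen]

/-- Lemma 4.2(i): if `α = δ^{-m} P₁ a₁ a₂^{2k} a₃ P₂` is a summit element closing to a knot and
`m ≤ |P| - (2k+1)`, then `α` is conjugate to `a₁ a₂^{2k} a₁⁻¹ W` which is a shortest word in
its conjugacy class. -/
theorem lemma_B_i (m k : ℕ) (hm : 1 ≤ m) (hk : 1 ≤ k) (P₁ P₂ : B3)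
    (h₁ : P₁ ∈ Pos) (h₂ : P₂ ∈ Pos) (P α : B3)
    (hP : P = P₁ * a 1 * (a 2) ^ (2 * k) * a 0 * P₂)
    (hα : α = δ ^ (-(m : ℤ)) * P)
    (h3 : (permOf α).IsThreeCycle)
    (hs : IsSummit α (-(m : ℤ)))
    (hle : (m : ℤ) ≤ elen P - (2 * (k : ℤ) + 1)) :
    (minConjLen α : ℤ) = elen P ∧
    ∃ s : List B3, (∀ g ∈ s, g ∈ genSet) ∧
      (s.length : ℤ) = elen P - (2 * (k : ℤ) + 2) ∧
      IsConj α (a 1 * (a 2) ^ (2 * k) * (a 1)⁻¹ * s.prod) :=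
  lemma_B_i_general m k hm P₁ P₂ h₁ h₂ P α hP hα hs hle
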